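/- Let G be a finite connected, non-complete strongly regular graph on v vertices with valency k, let θ1 be the second-largest and θ2 the smallest eigenvalue of its adjacency matrix, and let t = ⌊v/2⌋. If t·k − (2t+1)·θ1 + (t+1)·θ2 ≥ 0, then h_G ≤ (k − θ1)/k. -/

import Mathlib

/-!
For a set `S` of size `s` in a `k`-regular graph on `v` vertices, the vector `y = v·1_S - s·1` is
orthogonal to the all-ones eigenvector, and the Rayleigh bound `θ₂ ‖y‖² ≤ yᵀAy` turns into
`v · E[S,Sᶜ] ≤ (k - θ₂) s (v - s)`. Take `s = t = ⌊v/2⌋`. For `v = 2t + 1` the hypothesis says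
exactly that the right side is at most `v t (k - θ₁)`; for `v = 2t` this follows from the hypothesis
and `θ₂ ≤ θ₁`. Hence `E[S,Sᶜ] / (k s) ≤ (k - θ₁) / k`.
-/

open Finset Matrix

/-- `E[S,T]`: the number of ordered pairs `(x, y)` with `x ∈ S`, `y ∈ T` and `x, y` adjacent. -/
def eB {V : Type} [Fintype V] [DecidableEq V] (G : SimpleGraph V) [DecidableRel G.Adj]
    (S T : Finset V) : ℕ :=
  ((S ×ˢ T).filter fun p => G.Adj p.1 p.2).card

/-- The Cheeger constant of a `k`-regular graph `G`: the infimum of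
`E[S,Sᶜ] / (k·|S|)` over nonempty vertex subsets `S` with `2·|S| ≤ |V|`. -/
noncomputable def cheeger {V : Type} [Fintype V] [DecidableEq V] (G : SimpleGraph V)
    [DecidableRel G.Adj] (k : ℕ) : ℝ :=
  sInf {x : ℝ | ∃ S : Finset V, S.Nonempty ∧ 2 * S.card ≤ Fintype.card V ∧
    x = (eB G S Sᶜ : ℝ) / (k * S.card)}

/-- `θ` is an eigenvalue of the adjacency matrix of `G`. -/
def IsAdjEigenvalue {V : Type} [Fintype V] [DecidableEq V] (G : SimpleGraph V)
    [DecidableRel G.Adj] (θ : ℝ) : Prop :=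
  ∃ f : V → ℝ, f ≠ 0 ∧ G.adjMatrix ℝ *ᵥ f = θ • f

/-- `θ` is the second-largest adjacency eigenvalue of the connected `k`-regular graph `G`,
i.e. the largest eigenvalue distinct from the top eigenvalue `k`
(which has multiplicity one for connected graphs). -/
def IsSecondLargestAdjEigenvalue {V : Type} [Fintype V] [DecidableEq V] (G : SimpleGraph V)
    [DecidableRel G.Adj] (k : ℕ) (θ : ℝ) : Prop :=
  IsAdjEigenvalue G θ ∧ θ ≠ (k : ℝ) ∧ ∀ μ : ℝ, IsAdjEigenvalue G μ → μ ≠ (k : ℝ) → μ ≤ θ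

namespace Matrix

variable {n : Type*} [Fintype n] [DecidableEq n]

lemma IsHermitian.posSemidef_of_forall_eigenpair_nonneg {B : Matrix n n ℝ} (hB : B.IsHermitian)
    (h : ∀ (μ : ℝ) (f : n → ℝ), f ≠ 0 → B *ᵥ f = μ • f → 0 ≤ μ) : B.PosSemidef := by
  refine hB.posSemidef_iff_eigenvalues_nonneg.mpr fun i => h _ _ ?_ (hB.mulVec_eigenvectorBasis i)
  simpa using (hB.eigenvectorBasis).toBasis.ne_zero i

lemma IsHermitian.mul_dotProduct_self_le {A : Matrix n n ℝ} (hA : A.IsHermitian) {θ : ℝ}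
    (hθ : ∀ (μ : ℝ) (f : n → ℝ), f ≠ 0 → A *ᵥ f = μ • f → θ ≤ μ) (x : n → ℝ) :
    θ * (x ⬝ᵥ x) ≤ x ⬝ᵥ A *ᵥ x := by
  have hB : (A - θ • 1).PosSemidef := by
    refine (hA.sub (isHermitian_one.smul (IsSelfAdjoint.all θ)))
      |>.posSemidef_of_forall_eigenpair_nonneg fun μ f hf hμ => ?_
    rw [sub_mulVec, smul_mulVec, one_mulVec, sub_eq_iff_eq_add, ← add_smul] at hμ
    linarith [hθ _ f hf hμ]
  have := hB.dotProduct_mulVec_nonneg x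
  rw [star_trivial, sub_mulVec, smul_mulVec, one_mulVec, dotProduct_sub, dotProduct_smul,
    smul_eq_mul] at this
  linarith

end Matrix

namespace SimpleGraph

lemma two_le_card_of_ne_top {V : Type*} [Fintype V] {G : SimpleGraph V} (hG : G ≠ ⊤) :
    2 ≤ Fintype.card V := by
  by_contra! h
  have : Subsingleton V := Fintype.card_le_one_iff_subsingleton.mp (by omega)
  exact hG (by ext x y; simp [Subsingleton.elim x y])

variable {V : Type} [DecidableEq V]

def indicatorVec (S : Finset V) : V → ℝ := fun x => if x ∈ S then 1 else 0

variable [Fintype V]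

lemma indicatorVec_dotProduct (S : Finset V) (f : V → ℝ) :
    indicatorVec S ⬝ᵥ f = ∑ x ∈ S, f x := by
  simp [indicatorVec, dotProduct, ite_mul, sum_ite_mem]

lemma indicatorVec_dotProduct_indicatorVec (S T : Finset V) :
    indicatorVec S ⬝ᵥ indicatorVec T = #(S ∩ T) := by
  simp [indicatorVec_dotProduct, indicatorVec]

variable (G : SimpleGraph V) [DecidableRel G.Adj]

lemma eB_eq_sum (S T : Finset V) : eB G S T = ∑ x ∈ S, ∑ y ∈ T, if G.Adj x y then 1 else 0 := by
  rw [eB, card_filter, sum_product]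

lemma cast_eB_eq_dotProduct (S T : Finset V) :
    (eB G S T : ℝ) = indicatorVec S ⬝ᵥ G.adjMatrix ℝ *ᵥ indicatorVec T := by
  simp [eB_eq_sum, mulVec, dotProduct, indicatorVec]

lemma eB_comm (S T : Finset V) : eB G S T = eB G T S := by
  simp only [eB_eq_sum]
  rw [sum_comm]
  simp only [G.adj_comm]

lemma eB_add_eB_compl (S T : Finset V) : eB G S T + eB G S Tᶜ = eB G S univ := by
  simp only [eB_eq_sum, ← sum_add_distrib, sum_add_sum_compl]

lemma eB_univ_right {k : ℕ} (hreg : G.IsRegularOfDegree k) (S : Finset V) :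
    eB G S univ = k * #S := by
  simp [eB_eq_sum, ← neighborFinset_eq_filter, hreg _, mul_comm]

theorem card_mul_eB_compl_le {k : ℕ} (hreg : G.IsRegularOfDegree k) {θ : ℝ}
    (hθ : ∀ μ, IsAdjEigenvalue G μ → θ ≤ μ) (S : Finset V) :
    (Fintype.card V : ℝ) * eB G S Sᶜ ≤ (k - θ) * #S * (Fintype.card V - #S) := by
  have hsv : (#S : ℝ) ≤ Fintype.card V := by exact_mod_cast card_le_univ S
  have hSSc : (eB G S S : ℝ) + eB G S Sᶜ = k * #S := by
    exact_mod_cast (eB_add_eB_compl G S S).trans (eB_univ_right G hreg S)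
  set v : ℝ := (Fintype.card V : ℝ)
  set s : ℝ := (#S : ℝ)
  set y := v • indicatorVec S - s • indicatorVec univ
  have hyy : y ⬝ᵥ y = v * s * (v - s) := by
    simp only [y, dotProduct_sub, sub_dotProduct, dotProduct_smul, smul_dotProduct,
      indicatorVec_dotProduct_indicatorVec, inter_self, inter_univ, univ_inter, card_univ,
      smul_eq_mul]
    ring
  have hyAy : y ⬝ᵥ G.adjMatrix ℝ *ᵥ y = v * (v * eB G S S - k * s ^ 2) := by
    simp only [y, mulVec_sub, mulVec_smul, dotProduct_sub, sub_dotProduct, dotProduct_smul,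
      smul_dotProduct, ← cast_eB_eq_dotProduct, eB_comm G univ S, eB_univ_right G hreg,
      card_univ, smul_eq_mul]
    push_cast
    ring
  have hRay := (G.isHermitian_adjMatrix ℝ).mul_dotProduct_self_le
    (fun μ f hf hμ => hθ μ ⟨f, hf, hμ⟩) y
  rw [hyy, hyAy] at hRay
  rcases (show (0 : ℝ) ≤ s by positivity).trans hsv |>.eq_or_lt with hv | hv
  · have hs : s = 0 := le_antisymm (hv ▸ hsv) (by positivity)
    rw [← hv, hs]
    simp
  · have : θ * (s * (v - s)) ≤ v * eB G S S - k * s ^ 2 :=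
      le_of_mul_le_mul_left (by linarith) hv
    nlinarith

theorem cheeger_le_div {k : ℕ} {S : Finset V} (hS : S.Nonempty)
    (hSV : 2 * #S ≤ Fintype.card V) {c : ℝ} (h : (eB G S Sᶜ : ℝ) ≤ #S * c) :
    cheeger G k ≤ c / k := by
  have hbdd : BddBelow {x : ℝ | ∃ S : Finset V, S.Nonempty ∧ 2 * #S ≤ Fintype.card V ∧
      x = (eB G S Sᶜ : ℝ) / (k * #S)} := by
    refine ⟨0, ?_⟩
    rintro _ ⟨T, -, -, rfl⟩
    positivity
  calc cheeger G k ≤ (eB G S Sᶜ : ℝ) / (k * #S) := csInf_le hbdd ⟨S, hS, hSV, rfl⟩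
    _ = (eB G S Sᶜ : ℝ) / #S / k := div_mul_eq_div_div_swap ..
    _ ≤ c / k := by
      gcongr
      rw [div_le_iff₀' (by exact_mod_cast hS.card_pos)]
      exact h

end SimpleGraph

theorem stmt_9_general {V : Type} [Fintype V] [DecidableEq V] (G : SimpleGraph V) [DecidableRel G.Adj]
    (v k a1 c2 : ℕ) (hsrg : G.IsSRGWith v k a1 c2)
    (hnc : G ≠ ⊤)
    (θ1 θ2 : ℝ) (hθ1 : IsSecondLargestAdjEigenvalue G k θ1)
    (hθ2min : ∀ μ : ℝ, IsAdjEigenvalue G μ → θ2 ≤ μ)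
    (t : ℕ) (ht : t = v / 2)
    (hineq : 0 ≤ (t : ℝ) * (k : ℝ) - (2 * (t : ℝ) + 1) * θ1 + ((t : ℝ) + 1) * θ2) :
    cheeger G k ≤ ((k : ℝ) - θ1) / (k : ℝ) := by
  have hv : Fintype.card V = v := hsrg.card
  have hv2 : 2 ≤ v := hv ▸ SimpleGraph.two_le_card_of_ne_top hnc
  obtain ⟨S, -, hS⟩ := exists_subset_card_eq (s := (univ : Finset V)) (n := t)
    (by rw [card_univ, hv]; omega)
  refine G.cheeger_le_div (S := S) (card_pos.mp (by omega)) (by omega) ?_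
  have hbound := G.card_mul_eB_compl_le hsrg.regular hθ2min S
  rw [hv, hS] at hbound
  have hθ : θ2 ≤ θ1 := hθ2min θ1 hθ1.1
  have hparity : ((k : ℝ) - θ2) * (v - t) ≤ v * (k - θ1) := by
    rcases (by omega : v = 2 * t ∨ v = 2 * t + 1) with rfl | rfl <;>
    · push_cast
      linarith
  rw [hS]
  refine le_of_mul_le_mul_left ?_ (by positivity : (0 : ℝ) < v)
  calc (v : ℝ) * eB G S Sᶜ ≤ (k - θ2) * t * (v - t) := hbound
    _ = t * ((k - θ2) * (v - t)) := by ring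
    _ ≤ t * (v * (k - θ1)) := by gcongr
    _ = v * (t * (k - θ1)) := by ring

/-- Let `G` be a finite connected non-complete strongly regular graph on `v` vertices with
valency `k`, second-largest adjacency eigenvalue `θ1`, smallest adjacency eigenvalue `θ2`,
and `t = ⌊v/2⌋`. If `t·k - (2t+1)·θ1 + (t+1)·θ2 ≥ 0`, then `h_G ≤ (k - θ1)/k`. -/
theorem stmt_9 {V : Type} [Fintype V] [DecidableEq V] (G : SimpleGraph V) [DecidableRel G.Adj]
    (v k a1 c2 : ℕ) (hsrg : G.IsSRGWith v k a1 c2)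
    (hconn : G.Connected) (hnc : G ≠ ⊤)
    (θ1 θ2 : ℝ) (hθ1 : IsSecondLargestAdjEigenvalue G k θ1)
    (hθ2e : IsAdjEigenvalue G θ2) (hθ2min : ∀ μ : ℝ, IsAdjEigenvalue G μ → θ2 ≤ μ)
    (t : ℕ) (ht : t = v / 2)
    (hineq : 0 ≤ (t : ℝ) * (k : ℝ) - (2 * (t : ℝ) + 1) * θ1 + ((t : ℝ) + 1) * θ2) :
    cheeger G k ≤ ((k : ℝ) - θ1) / (k : ℝ) :=
  stmt_9_general G v k a1 c2 hsrg hnc θ1 θ2 hθ1 hθ2min t ht hineq
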